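/- arXiv:1412.1616 — 8 statements merged into one kernel-verified Lean document; each statement's English description precedes it below -/
import Mathlib

section
/- For every natural number n and every real x, the derivatives f_n of f(x) = 1/(1+x^2) satisfy the recurrence (1+x^2) f_{n+2}(x) + 2(n+2) x f_{n+1}(x) + (n+2)(n+1) f_n(x) = 0. -/
/-! Differentiate the identity `(1 + x ^ 2) * f x = 1` exactly `n + 2` times with the Leibniz
rule: since the third derivative of `1 + x ^ 2` vanishes, only three terms survive, and they are
the left-hand side of the recurrence. -/

open Finset

theorem iteratedDeriv_fun_mul_of_iteratedDeriv_add_three_eq_zero {𝕜 : Type*}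
    [NontriviallyNormedField 𝕜] {f g : 𝕜 → 𝕜} {x : 𝕜} {n : ℕ}
    (hg : ContDiffAt 𝕜 (n + 2) g x) (hf : ContDiffAt 𝕜 (n + 2) f x)
    (hg₃ : ∀ k, iteratedDeriv (k + 3) g x = 0) :
    iteratedDeriv (n + 2) (fun y ↦ g y * f y) x =
      g x * iteratedDeriv (n + 2) f x + (n + 2) * deriv g x * iteratedDeriv (n + 1) f x
        + (n + 2).choose 2 * iteratedDeriv 2 g x * iteratedDeriv n f x := by
  rw [iteratedDeriv_fun_mul hg hf, sum_range_succ', sum_range_succ', sum_range_succ']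
  norm_num [hg₃, iteratedDeriv_one]
  ring

theorem iteratedDeriv_one_add_sq (x : ℝ) :
    deriv (fun y : ℝ ↦ 1 + y ^ 2) x = 2 * x ∧ iteratedDeriv 2 (fun y : ℝ ↦ 1 + y ^ 2) x = 2 ∧
      ∀ k, iteratedDeriv (k + 3) (fun y : ℝ ↦ 1 + y ^ 2) x = 0 := by
  refine ⟨?_, ?_, fun k ↦ ?_⟩ <;>
    simp (discharger := fun_prop) [iteratedDeriv_fun_add, iteratedDeriv_const]

theorem stmt_1 (f : ℝ → ℝ) (hf : ∀ x : ℝ, f x = 1 / (1 + x ^ 2)) (n : ℕ) (x : ℝ) :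
    (1 + x ^ 2) * iteratedDeriv (n + 2) f x + 2 * (n + 2) * x * iteratedDeriv (n + 1) f x
      + (n + 2) * (n + 1) * iteratedDeriv n f x = 0 := by
  have hf_smooth : ContDiff ℝ ⊤ f := by
    rw [funext hf]
    exact contDiff_const.div (by fun_prop) fun y ↦ by positivity
  have hprod : (fun y ↦ (1 + y ^ 2) * f y) = fun _ ↦ 1 := by
    ext y
    rw [hf]
    field_simp
  obtain ⟨hg₁, hg₂, hg₃⟩ := iteratedDeriv_one_add_sq x
  have hleibniz := iteratedDeriv_fun_mul_of_iteratedDeriv_add_three_eq_zero (n := n) (by fun_prop)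
    (hf_smooth.contDiffAt.of_le (by exact_mod_cast le_top)) hg₃
  rw [hprod, iteratedDeriv_const, if_neg (by omega), hg₁, hg₂, Nat.cast_choose_two] at hleibniz
  push_cast at hleibniz
  linear_combination -hleibniz
end

section
/- For every natural number n ≥ 2, the values at 0 of the derivatives of f(x) = 1/(1+x^2) satisfy f_n(0) = -n(n-1) f_{n-2}(0). -/
/-! Since `(1 + x ^ 2) * f x = 1`, the `n`-th derivative of the product vanishes for `n ≥ 1`. In
Leibniz's expansion of that derivative at `0` only two terms survive, because `1 + x ^ 2` has
derivatives `1, 0, 2, 0, 0, …` there; this leaves `f_n(0) + n (n - 1) f_{n-2}(0) = 0`. -/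

open Topology

variable {𝕜 : Type*} [NontriviallyNormedField 𝕜]

theorem iteratedDeriv_one_add_sq_zero (k : ℕ) :
    iteratedDeriv k (fun x : 𝕜 ↦ 1 + x ^ 2) 0 = if k = 0 then 1 else if k = 2 then 2 else 0 := by
  rw [iteratedDeriv_fun_add (by fun_prop) (by fun_prop), iteratedDeriv_fun_pow_zero]
  rcases k with _ | _ | _ | k <;> simp [iteratedDeriv_const]

theorem iteratedDeriv_one_add_sq_mul_zero {f : 𝕜 → 𝕜} (n : ℕ) (hf : ContDiffAt 𝕜 (n + 2) f 0) :
    iteratedDeriv (n + 2) (fun x ↦ (1 + x ^ 2) * f x) 0 =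
      iteratedDeriv (n + 2) f 0 + (n + 2) * (n + 1) * iteratedDeriv n f 0 := by
  have hchoose : ((n + 2).choose 2 : 𝕜) * 2 = (n + 2) * (n + 1) := by
    have h : (n + 2).choose 2 * 2 = (n + 2) * (n + 1) := by
      simpa using (Nat.add_one_mul_choose_eq (n + 1) 1).symm
    simpa using congrArg (Nat.cast : ℕ → 𝕜) h
  rw [iteratedDeriv_fun_mul (by fun_prop) hf]
  simp only [Finset.sum_range_succ' _ (n + 2), Finset.sum_range_succ' _ (n + 1),
    Finset.sum_range_succ' _ n, iteratedDeriv_one_add_sq_zero]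
  simp [← hchoose]
  ring

theorem iteratedDeriv_zero_of_one_add_sq_mul_eq_one {f : 𝕜 → 𝕜} (n : ℕ)
    (hf : ContDiffAt 𝕜 (n + 2) f 0) (hinv : (fun x ↦ (1 + x ^ 2) * f x) =ᶠ[𝓝 0] fun _ ↦ 1) :
    iteratedDeriv (n + 2) f 0 = -((n + 2) * (n + 1)) * iteratedDeriv n f 0 := by
  have hconst : iteratedDeriv (n + 2) (fun x ↦ (1 + x ^ 2) * f x) 0 = 0 := by
    rw [hinv.iteratedDeriv_eq, iteratedDeriv_const, if_neg (by omega)]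
  rw [iteratedDeriv_one_add_sq_mul_zero n hf] at hconst
  linear_combination hconst

theorem stmt_2 (f : ℝ → ℝ) (hf : ∀ x : ℝ, f x = 1 / (1 + x ^ 2)) (n : ℕ) (hn : 2 ≤ n) :
    iteratedDeriv n f 0 = -(n * (n - 1)) * iteratedDeriv (n - 2) f 0 := by
  obtain ⟨n, rfl⟩ := Nat.exists_eq_add_of_le' hn
  have hpos (x : ℝ) : 1 + x ^ 2 ≠ 0 := by positivity
  have hf_eq : f = fun x ↦ (1 + x ^ 2)⁻¹ := funext fun x ↦ by rw [hf, one_div]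
  have hsmooth : ContDiff ℝ (n + 2) f := hf_eq ▸ (by fun_prop : ContDiff ℝ _ _).inv hpos
  have hinv : ∀ x, (1 + x ^ 2) * f x = 1 := fun x ↦ by rw [hf_eq, mul_inv_cancel₀ (hpos x)]
  rw [iteratedDeriv_zero_of_one_add_sq_mul_eq_one n hsmooth.contDiffAt (.of_forall hinv)]
  push_cast
  ring_nf
end

section
/- For every natural number n, the n-th derivative f_n of f(x) = 1/(1+x^2) tends to 0 as x → +∞. -/
/-! By induction, the `n`-th derivative of `1 / Q` for a polynomial `Q` without real roots is
`P / Q ^ (n + 1)` with `deg P ≤ n (deg Q - 1)`: each differentiation raises the degree of the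
numerator by at most `deg Q - 1`. Once `deg Q ≥ 1` this is less than `(n + 1) deg Q`, so the
quotient tends to `0` at `+∞`. -/

open Polynomial Filter Topology

namespace Polynomial

noncomputable def quotientDerivNumerator (P Q : ℝ[X]) (m : ℕ) : ℝ[X] :=
  derivative P * Q - C (m : ℝ) * derivative Q * P

theorem hasDerivAt_eval_div_eval_pow (P Q : ℝ[X]) (m : ℕ) {x : ℝ} (hx : Q.eval x ≠ 0) :
    HasDerivAt (fun y => P.eval y / Q.eval y ^ m)
      ((quotientDerivNumerator P Q m).eval x / Q.eval x ^ (m + 1)) x := by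
  refine ((P.hasDerivAt x).fun_div ((Q.hasDerivAt x).fun_pow m) (pow_ne_zero m hx)).congr_deriv ?_
  simp only [quotientDerivNumerator, eval_sub, eval_mul, eval_C]
  rcases m with _ | m
  · simp [field]
  · field_simp
    push_cast
    ring

theorem natDegree_quotientDerivNumerator_add_one_le (P : ℝ[X]) {Q : ℝ[X]} (m : ℕ)
    (hQ : 1 ≤ Q.natDegree) :
    (quotientDerivNumerator P Q m).natDegree + 1 ≤ P.natDegree + Q.natDegree := by
  have hP' : (derivative P * Q).natDegree + 1 ≤ P.natDegree + Q.natDegree := by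
    rcases eq_or_ne P.natDegree 0 with hP | hP
    · simp only [derivative_of_natDegree_zero hP, zero_mul, natDegree_zero, zero_add]
      omega
    · have := natDegree_derivative_lt hP
      have := natDegree_mul_le (p := derivative P) (q := Q)
      omega
  have hQ' : (C (m : ℝ) * derivative Q * P).natDegree + 1 ≤ P.natDegree + Q.natDegree := by
    have := natDegree_derivative_lt (p := Q) (by omega)
    have := natDegree_mul_le (p := C (m : ℝ) * derivative Q) (q := P)
    have := natDegree_C_mul_le (m : ℝ) (derivative Q)
    omega
  have := natDegree_sub_le (derivative P * Q) (C (m : ℝ) * derivative Q * P)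
  simp only [quotientDerivNumerator]
  omega

variable {Q : ℝ[X]}

theorem exists_iteratedDeriv_inv_eval_eq (hQ : ∀ x, Q.eval x ≠ 0) (hdeg : 1 ≤ Q.natDegree)
    (n : ℕ) : ∃ P : ℝ[X], P.natDegree + n ≤ n * Q.natDegree ∧
      iteratedDeriv n (fun x => (Q.eval x)⁻¹) = fun x => P.eval x / Q.eval x ^ (n + 1) := by
  induction n with
  | zero => exact ⟨1, by simp, by simp⟩
  | succ n ih =>
    obtain ⟨P, hPdeg, hP⟩ := ih
    refine ⟨quotientDerivNumerator P Q (n + 1), ?_, ?_⟩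
    · have := natDegree_quotientDerivNumerator_add_one_le P (n + 1) hdeg
      rw [add_one_mul]
      omega
    · rw [iteratedDeriv_succ, hP]
      ext x
      exact (hasDerivAt_eval_div_eval_pow P Q (n + 1) (hQ x)).deriv

theorem tendsto_iteratedDeriv_inv_eval_atTop (hQ : ∀ x, Q.eval x ≠ 0) (hdeg : 1 ≤ Q.natDegree)
    (n : ℕ) : Tendsto (iteratedDeriv n fun x => (Q.eval x)⁻¹) atTop (𝓝 0) := by
  obtain ⟨P, hPdeg, hP⟩ := exists_iteratedDeriv_inv_eval_eq hQ hdeg n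
  have hlt : P.degree < (Q ^ (n + 1)).degree := by
    apply degree_lt_degree
    rw [natDegree_pow, add_one_mul]
    omega
  simpa only [hP, eval_pow] using div_tendsto_atTop_zero_of_degree_lt P _ hlt

end Polynomial

theorem stmt_4 (f : ℝ → ℝ) (hf : ∀ x : ℝ, f x = 1 / (1 + x ^ 2)) (n : ℕ) :
    Filter.Tendsto (iteratedDeriv n f) Filter.atTop (nhds 0) := by
  have hf_eq : f = fun x => ((X ^ 2 + 1 : ℝ[X]).eval x)⁻¹ := by
    ext x
    simp [hf, add_comm]
  have hdeg : (X ^ 2 + 1 : ℝ[X]).natDegree = 2 := by compute_degree!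
  have hQ (x : ℝ) : (X ^ 2 + 1 : ℝ[X]).eval x ≠ 0 := by
    simp only [eval_add, eval_pow, eval_X, eval_one]
    positivity
  rw [hf_eq]
  exact tendsto_iteratedDeriv_inv_eval_atTop hQ (by omega) n
end

section
/- For every real z ≥ 0, one has ∫_0^∞ cos(xz)/(1+x^2) dx = (π/2) e^{-z}. -/
/-!
The Fourier transform of `e^{-|x|}` is `2 / (1 + (2πξ)²)`, an integrable function, so Fourier
inversion at `z` (real parts, then the substitution `u = 2πξ`) gives
`∫_ℝ cos (x z) / (1 + x²) dx = π e^{-|z|}`. The integrand is even in `x`, so the half-line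
integral is half of that.
-/

open MeasureTheory Real Set FourierTransform

lemma integrable_exp_neg_mul_abs {a : ℝ} (ha : 0 < a) :
    Integrable fun x : ℝ => exp (-a * |x|) := by
  rw [← integrableOn_univ, ← Iic_union_Ioi (a := (0 : ℝ))]
  refine IntegrableOn.union ?_ ?_
  · refine (integrableOn_exp_mul_Iic ha 0).congr_fun (fun x hx => ?_) measurableSet_Iic
    simp [abs_of_nonpos (show x ≤ 0 from hx)]
  · refine (integrableOn_exp_mul_Ioi (neg_lt_zero.2 ha) 0).congr_fun (fun x hx => ?_)
      measurableSet_Ioi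
    simp [abs_of_pos (show 0 < x from hx)]

lemma re_fourier_ofReal_eq_integral_cos {g : ℝ → ℝ} (hg : Integrable g) (w : ℝ) :
    (𝓕 (fun v => (g v : ℂ)) w).re = ∫ v, cos (2 * π * v * w) * g v := by
  have hint :
      Integrable fun v : ℝ => Complex.exp (↑(-2 * π * v * w) * Complex.I) • (g v : ℂ) := by
    refine (integrable_norm_iff ?_).1 ?_
    · have : Continuous fun v : ℝ => Complex.exp (↑(-2 * π * v * w) * Complex.I) := by fun_prop
      exact this.aestronglyMeasurable.smul hg.ofReal.aestronglyMeasurable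
    · simpa only [norm_smul, Complex.norm_exp_ofReal_mul_I, one_mul, Complex.norm_real]
        using hg.norm
  rw [fourier_real_eq_integral_exp_smul, ← RCLike.re_to_complex, ← integral_re hint]
  congr 1 with v
  rw [smul_eq_mul, RCLike.re_to_complex, Complex.re_mul_ofReal, Complex.exp_ofReal_mul_I_re,
    show -2 * π * v * w = -(2 * π * v * w) by ring, cos_neg]

theorem fourier_exp_neg_mul_abs {a : ℝ} (ha : 0 < a) (w : ℝ) :
    𝓕 (fun x : ℝ => (exp (-a * |x|) : ℂ)) w = (2 * a / (a ^ 2 + (2 * π * w) ^ 2) : ℝ) := by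
  set c : ℂ := 2 * π * w * Complex.I
  set F : ℝ → ℂ := fun v => Complex.exp (↑(-2 * π * v * w) * Complex.I) • (exp (-a * |v|) : ℂ)
  have hIic : EqOn F (fun v : ℝ => Complex.exp ((a - c) * v)) (Iic 0) := fun v hv => by
    simp only [F, c, abs_of_nonpos (show v ≤ 0 from hv), smul_eq_mul, Complex.ofReal_exp,
      ← Complex.exp_add]
    push_cast; ring_nf
  have hIoi : EqOn F (fun v : ℝ => Complex.exp ((-a - c) * v)) (Ioi 0) := fun v hv => by
    simp only [F, c, abs_of_pos (show 0 < v from hv), smul_eq_mul, Complex.ofReal_exp,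
      ← Complex.exp_add]
    push_cast; ring_nf
  have hre₁ : 0 < (a - c).re := by simp [c, ha]
  have hre₂ : (-a - c).re < 0 := by simp [c, ha]
  rw [fourier_real_eq_integral_exp_smul, ← intervalIntegral.integral_Iic_add_Ioi
    ((integrableOn_exp_mul_complex_Iic hre₁ 0).congr_fun hIic.symm measurableSet_Iic)
    ((integrableOn_exp_mul_complex_Ioi hre₂ 0).congr_fun hIoi.symm measurableSet_Ioi),
    setIntegral_congr_fun measurableSet_Iic hIic, setIntegral_congr_fun measurableSet_Ioi hIoi,
    integral_exp_mul_complex_Iic hre₁, integral_exp_mul_complex_Ioi hre₂]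
  have h₁ : a - c ≠ 0 := fun h => by simp [h] at hre₁
  have hden : (a - c) * (a + c) = (a ^ 2 + (2 * π * w) ^ 2 : ℝ) := by
    simp only [c]; push_cast; ring_nf; rw [Complex.I_sq]; ring
  have h₂ : (a : ℂ) + c ≠ 0 := fun h => by
    have := congrArg Complex.re h
    simp [c] at this
    exact ha.ne' this
  simp only [Complex.ofReal_zero, mul_zero, Complex.exp_zero]
  rw [show -(a : ℂ) - c = -(a + c) by ring, neg_div_neg_eq, div_add_div _ _ h₁ h₂, hden]
  push_cast
  ring

theorem integral_cos_mul_div_one_add_sq (z : ℝ) :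
    ∫ x : ℝ, cos (x * z) / (1 + x ^ 2) = π * exp (-|z|) := by
  set f : ℝ → ℂ := fun x => (exp (-1 * |x|) : ℂ)
  set g : ℝ → ℝ := fun w => 2 / (1 + (2 * π * w) ^ 2)
  have hfourier : 𝓕 f = fun w => (g w : ℂ) := funext fun w => by
    simpa [f, g] using fourier_exp_neg_mul_abs one_pos w
  have hg : Integrable g := by
    refine ((integrable_inv_one_add_sq.comp_mul_left' two_pi_pos.ne').const_mul 2).congr ?_
    exact Filter.Eventually.of_forall fun w => by simp [g, div_eq_mul_inv]
  have hinv : 𝓕⁻ (𝓕 f) z = f z :=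
    congrFun ((by fun_prop : Continuous f).fourierInv_fourier_eq
      (integrable_exp_neg_mul_abs one_pos).ofReal (hfourier ▸ hg.ofReal)) z
  have hre := re_fourier_ofReal_eq_integral_cos hg (-z)
  rw [← hfourier, ← fourierInv_eq_fourier_neg, hinv] at hre
  have hsubst := Measure.integral_comp_mul_left (fun u => 2 * (cos (u * z) / (1 + u ^ 2))) (2 * π)
  have hscale : ∀ v, cos (2 * π * v * -z) * g v =
      2 * (cos (2 * π * v * z) / (1 + (2 * π * v) ^ 2)) := fun v => by
    simp only [g, mul_neg, cos_neg]
    ring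
  simp only [hscale] at hre
  rw [hsubst, integral_const_mul, smul_eq_mul, abs_of_pos (by positivity)] at hre
  simp only [f, Complex.ofReal_re, neg_mul, one_mul] at hre
  field_simp at hre
  linarith

theorem stmt_6 (z : ℝ) (hz : 0 ≤ z) :
    ∫ x in Set.Ioi (0 : ℝ), Real.cos (x * z) / (1 + x ^ 2)
      = (Real.pi / 2) * Real.exp (-z) := by
  have hcos : ∀ x : ℝ, cos (|x| * z) = cos (x * z) := fun x => by
    rcases abs_choice x with h | h <;> simp [h]
  have h := integral_comp_abs (f := fun x => cos (x * z) / (1 + x ^ 2))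
  simp only [hcos, sq_abs, integral_cos_mul_div_one_add_sq, abs_of_nonneg hz] at h
  linarith
end

section
/- For every natural number n and every real x, the n-th derivative of f(x) = 1/(1+x^2) admits the representation f_n(x) = ∫_0^∞ z^n e^{-z} cos(xz + nπ/2) dz. -/
/-!
`1 / (1 + x ^ 2)` is the real part of `(1 - i x)⁻¹`, whose `n`-th derivative is
`n! iⁿ / (1 - i x) ^ (n + 1)`. For `Re a > 0`, integration by parts gives the Laplace moments
`∫₀^∞ tⁿ e^{-a t} dt = n! / a ^ (n + 1)`; with `a = 1 - i x` and `iⁿ = e^{i n π / 2}`, the real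
part of `iⁿ tⁿ e^{-(1 - i x) t}` is `tⁿ e^{-t} cos (x t + n π / 2)`.
-/

open MeasureTheory Set Filter Topology Complex
open scoped Nat

section LaplaceMoments

variable {a : ℂ}

lemma norm_ofReal_pow_mul_cexp_neg_mul (n : ℕ) (t : ℝ) :
    ‖(t : ℂ) ^ n * cexp (-(a * t))‖ = |t| ^ n * Real.exp (-(a.re * t)) := by
  simp [Complex.norm_exp]

lemma integrableOn_pow_mul_cexp_neg_mul_Ioi (ha : 0 < a.re) (n : ℕ) :
    IntegrableOn (fun t : ℝ => (t : ℂ) ^ n * cexp (-(a * t))) (Ioi 0) := by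
  have hdom : IntegrableOn (fun t : ℝ => t ^ (n : ℝ) * Real.exp (-a.re * t ^ (1 : ℝ))) (Ioi 0) :=
    integrableOn_rpow_mul_exp_neg_mul_rpow (by linarith [n.cast_nonneg (α := ℝ)]) one_pos ha
  refine hdom.mono' (by fun_prop) ?_
  filter_upwards [ae_restrict_mem measurableSet_Ioi] with t (ht : 0 < t)
  rw [norm_ofReal_pow_mul_cexp_neg_mul, abs_of_pos ht, Real.rpow_natCast, Real.rpow_one, neg_mul]

lemma tendsto_pow_mul_cexp_neg_mul_atTop (ha : 0 < a.re) (n : ℕ) :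
    Tendsto (fun t : ℝ => (t : ℂ) ^ n * cexp (-(a * t))) atTop (𝓝 0) := by
  rw [tendsto_zero_iff_norm_tendsto_zero]
  refine (tendsto_rpow_mul_exp_neg_mul_atTop_nhds_zero n a.re ha).congr' ?_
  filter_upwards [eventually_ge_atTop 0] with t ht
  rw [norm_ofReal_pow_mul_cexp_neg_mul, abs_of_nonneg ht, Real.rpow_natCast, neg_mul]

lemma integral_pow_mul_cexp_neg_mul_Ioi (ha : 0 < a.re) (n : ℕ) :
    ∫ t in Ioi (0 : ℝ), (t : ℂ) ^ n * cexp (-(a * t)) = n ! / a ^ (n + 1) := by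
  have ha0 : a ≠ 0 := fun h => by simp [h] at ha
  induction n with
  | zero =>
    simpa [← neg_mul, div_eq_inv_mul] using
      integral_exp_mul_complex_Ioi (a := -a) (by simpa using ha) 0
  | succ n ih =>
    have hderiv : ∀ t ∈ Ici (0 : ℝ),
        HasDerivAt (fun t : ℝ => (t : ℂ) ^ (n + 1) * cexp (-(a * t)))
          ((n + 1) * ((t : ℂ) ^ n * cexp (-(a * t))) - a * ((t : ℂ) ^ (n + 1) * cexp (-(a * t))))
          t := by
      intro t _
      have hpow := (hasDerivAt_pow (n + 1) (t : ℂ)).comp_ofReal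
      have hlin : HasDerivAt (fun t : ℝ => -(a * t)) (-a) t := by
        simpa using ((ofRealCLM.hasDerivAt (x := t)).const_mul a).fun_neg
      refine (hpow.fun_mul hlin.cexp).congr_deriv ?_
      rw [Nat.add_sub_cancel]
      push_cast
      ring
    have hparts := integral_Ioi_of_hasDerivAt_of_tendsto' hderiv
      (((integrableOn_pow_mul_cexp_neg_mul_Ioi ha n).const_mul _).sub
        ((integrableOn_pow_mul_cexp_neg_mul_Ioi ha (n + 1)).const_mul _))
      (tendsto_pow_mul_cexp_neg_mul_atTop ha (n + 1))
    rw [integral_sub ((integrableOn_pow_mul_cexp_neg_mul_Ioi ha n).const_mul _)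
        ((integrableOn_pow_mul_cexp_neg_mul_Ioi ha (n + 1)).const_mul _),
      integral_const_mul, integral_const_mul, ih] at hparts
    simp only [ofReal_zero, ne_eq, Nat.add_eq_zero_iff, one_ne_zero, and_false,
      not_false_eq_true, zero_pow, zero_mul, sub_zero, sub_eq_zero] at hparts
    rw [Nat.factorial_succ, Nat.cast_mul, pow_succ, ← div_div, eq_div_iff ha0, mul_comm,
      ← hparts]
    push_cast
    ring

end LaplaceMoments

theorem ContinuousLinearMap.iteratedDeriv_comp_left {𝕜 F G : Type*} [NontriviallyNormedField 𝕜]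
    [NormedAddCommGroup F] [NormedSpace 𝕜 F] [NormedAddCommGroup G] [NormedSpace 𝕜 G]
    (L : F →L[𝕜] G) {f : 𝕜 → F} {x : 𝕜} {n : WithTop ℕ∞} (hf : ContDiffAt 𝕜 n f x) {i : ℕ}
    (hi : i ≤ n) : iteratedDeriv i (L ∘ f) x = L (iteratedDeriv i f x) := by
  simp only [iteratedDeriv_eq_iteratedFDeriv, L.iteratedFDeriv_comp_left hf hi,
    compContinuousMultilinearMap_coe, Function.comp_apply]

section InvOneSubMul

variable {c : ℂ}

lemma hasDerivAt_inv_one_sub_mul_pow (n : ℕ) {x : ℝ} (hx : 1 - c * x ≠ 0) :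
    HasDerivAt (fun y : ℝ => ((1 - c * y) ^ (n + 1))⁻¹)
      ((n + 1) * c * ((1 - c * x) ^ (n + 2))⁻¹) x := by
  have hlin : HasDerivAt (fun y : ℝ => 1 - c * y) (-c) x := by
    simpa using ((ofRealCLM.hasDerivAt (x := x)).const_mul c).const_sub 1
  refine ((hlin.fun_pow (n + 1)).inv (pow_ne_zero _ hx)).congr_deriv ?_
  field_simp
  push_cast
  ring

lemma iteratedDeriv_inv_one_sub_mul (hc : ∀ x : ℝ, 1 - c * x ≠ 0) (n : ℕ) :
    iteratedDeriv n (fun x : ℝ => (1 - c * x)⁻¹) =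
      fun x : ℝ => n ! * c ^ n * ((1 - c * x) ^ (n + 1))⁻¹ := by
  induction n with
  | zero => simp
  | succ n ih =>
    rw [iteratedDeriv_succ, ih]
    funext x
    refine ((hasDerivAt_inv_one_sub_mul_pow n (hc x)).const_mul _).deriv.trans ?_
    push_cast [Nat.factorial_succ]
    ring

lemma contDiff_inv_one_sub_mul (hc : ∀ x : ℝ, 1 - c * x ≠ 0) {n : WithTop ℕ∞} :
    ContDiff ℝ n (fun x : ℝ => (1 - c * x)⁻¹) :=
  (contDiff_const.sub (contDiff_const.mul ofRealCLM.contDiff)).inv hc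

end InvOneSubMul

lemma one_sub_I_mul_ofReal_ne_zero (x : ℝ) : 1 - I * x ≠ 0 := fun h => by
  simpa using congrArg re h

lemma re_inv_one_sub_I_mul (x : ℝ) : ((1 - I * x)⁻¹).re = 1 / (1 + x ^ 2) := by
  simp [inv_re, normSq_apply]
  ring

lemma iteratedDeriv_one_div_one_add_sq (n : ℕ) (x : ℝ) :
    iteratedDeriv n (fun x : ℝ => 1 / (1 + x ^ 2)) x =
      (n ! * I ^ n / (1 - I * x) ^ (n + 1)).re := by
  have hre : (fun x : ℝ => 1 / (1 + x ^ 2)) = reCLM ∘ fun x : ℝ => (1 - I * x)⁻¹ := by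
    funext x; exact (re_inv_one_sub_I_mul x).symm
  rw [hre, reCLM.iteratedDeriv_comp_left
      (contDiff_inv_one_sub_mul one_sub_I_mul_ofReal_ne_zero (n := n)).contDiffAt le_rfl,
    iteratedDeriv_inv_one_sub_mul one_sub_I_mul_ofReal_ne_zero, reCLM_apply, div_eq_mul_inv]

lemma re_I_pow_mul_pow_mul_cexp (n : ℕ) (x z : ℝ) :
    (I ^ n * ((z : ℂ) ^ n * cexp (-((1 - I * x) * z)))).re =
      z ^ n * Real.exp (-z) * Real.cos (x * z + n * Real.pi / 2) := by
  have hpolar : I ^ n * ((z : ℂ) ^ n * cexp (-((1 - I * x) * z))) =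
      ((z ^ n * Real.exp (-z) : ℝ) : ℂ) * cexp ((x * z + n * Real.pi / 2 : ℝ) * I) := by
    have hI : I ^ n = cexp (n * (Real.pi / 2 * I)) := by rw [exp_nat_mul, exp_pi_div_two_mul_I]
    rw [hI, mul_left_comm, ← exp_add]
    push_cast
    rw [mul_assoc, ← exp_add]
    ring_nf
  rw [hpolar, re_ofReal_mul, exp_ofReal_mul_I_re]

theorem stmt_7 (f : ℝ → ℝ) (hf : ∀ x : ℝ, f x = 1 / (1 + x ^ 2)) (n : ℕ) (x : ℝ) :
    iteratedDeriv n f x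
      = ∫ z in Set.Ioi (0 : ℝ), z ^ n * Real.exp (-z) * Real.cos (x * z + n * Real.pi / 2) := by
  obtain rfl : f = fun x => 1 / (1 + x ^ 2) := funext hf
  have hre : 0 < (1 - I * x).re := by simp
  calc iteratedDeriv n (fun x => 1 / (1 + x ^ 2)) x
      = (n ! * I ^ n / (1 - I * x) ^ (n + 1)).re := iteratedDeriv_one_div_one_add_sq n x
    _ = (∫ z in Ioi (0 : ℝ), I ^ n * ((z : ℂ) ^ n * cexp (-((1 - I * x) * z)))).re := by
      rw [integral_const_mul, integral_pow_mul_cexp_neg_mul_Ioi hre, mul_comm, mul_div_assoc]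
    _ = ∫ z in Ioi (0 : ℝ), (I ^ n * ((z : ℂ) ^ n * cexp (-((1 - I * x) * z)))).re :=
      (integral_re ((integrableOn_pow_mul_cexp_neg_mul_Ioi hre n).const_mul _)).symm
    _ = _ := setIntegral_congr_fun measurableSet_Ioi fun z _ => re_I_pow_mul_pow_mul_cexp n x z
end

section
/- For all natural numbers m and n with n ≥ 1, the integrals I_{m,n} satisfy the recurrence I_{m,n} = -f_m(0) f_{n-1}(0) - I_{m+1,n-1}. -/
open Polynomial Set MeasureTheory Filter Asymptotics Topology
open scoped ContDiff

/-!
The `k`-th derivative of `1 / (1 + x ^ 2)` has the form `p(x) / (1 + x ^ 2) ^ (k + 1)` with `p` a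
polynomial of degree at most `2 k`, hence is `O((1 + x ^ 2)⁻¹)` at `+∞`. So a product of two
derivatives is integrable on `(0, ∞)` and tends to `0` at `+∞`, and the recurrence is integration
by parts of `f_m · (f_{n-1})'`, whose boundary term is `-f_m(0) f_{n-1}(0)`.
-/

local notation "φ" => fun x : ℝ => 1 / (1 + x ^ 2)

theorem ContDiff.hasDerivAt_iteratedDeriv {𝕜 F : Type*} [NontriviallyNormedField 𝕜]
    [NormedAddCommGroup F] [NormedSpace 𝕜 F] {g : 𝕜 → F} (hg : ContDiff 𝕜 ∞ g) (k : ℕ) (x : 𝕜) :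
    HasDerivAt (iteratedDeriv k g) (iteratedDeriv (k + 1) g x) x := by
  rw [iteratedDeriv_succ]
  exact (hg.differentiable_iteratedDeriv k (by exact_mod_cast ENat.natCast_lt_top k)).differentiableAt
    |>.hasDerivAt

theorem integral_Ioi_iteratedDeriv_mul_iteratedDeriv_succ {g : ℝ → ℝ} (hg : ContDiff ℝ ∞ g)
    {a : ℝ} {m n : ℕ}
    (hint : IntegrableOn (fun x => iteratedDeriv m g x * iteratedDeriv (n + 1) g x) (Ioi a))
    (hint' : IntegrableOn (fun x => iteratedDeriv (m + 1) g x * iteratedDeriv n g x) (Ioi a))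
    (hlim : Tendsto (fun x => iteratedDeriv m g x * iteratedDeriv n g x) atTop (𝓝 0)) :
    ∫ x in Ioi a, iteratedDeriv m g x * iteratedDeriv (n + 1) g x =
      -(iteratedDeriv m g a * iteratedDeriv n g a) -
        ∫ x in Ioi a, iteratedDeriv (m + 1) g x * iteratedDeriv n g x := by
  have hcont : Continuous fun x => iteratedDeriv m g x * iteratedDeriv n g x :=
    (hg.continuous_iteratedDeriv m (by exact_mod_cast le_top)).mul
      (hg.continuous_iteratedDeriv n (by exact_mod_cast le_top))
  rw [integral_Ioi_mul_deriv_eq_deriv_mul (fun x _ => hg.hasDerivAt_iteratedDeriv m x)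
    (fun x _ => hg.hasDerivAt_iteratedDeriv n x) hint hint'
    ((hcont.tendsto a).mono_left nhdsWithin_le_nhds) hlim, zero_sub]

theorem contDiff_one_div_one_add_sq : ContDiff ℝ ∞ φ :=
  contDiff_const.div (by fun_prop) fun x => by positivity

theorem exists_iteratedDeriv_one_div_one_add_sq_eq (k : ℕ) :
    ∃ p : ℝ[X], p.natDegree ≤ 2 * k ∧ ∀ x,
      iteratedDeriv k φ x = p.eval x / (1 + x ^ 2) ^ (k + 1) := by
  -- The bound `2 k` (not the sharp `k`) survives `natDegree_derivative_le` without a case split.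
  induction k with
  | zero => exact ⟨1, by simp, fun x => by simp⟩
  | succ k ih =>
    obtain ⟨p, hdeg, hp⟩ := ih
    refine ⟨derivative p * (1 + X ^ 2) - C (2 * (k + 1 : ℝ)) * X * p, ?_, fun x => ?_⟩
    · have hp' : (derivative p).natDegree ≤ 2 * k := (natDegree_derivative_le p).trans (by omega)
      have hq : (1 + X ^ 2 : ℝ[X]).natDegree ≤ 2 := by compute_degree
      have hX : (C (2 * (k + 1 : ℝ)) * X).natDegree ≤ 1 := by compute_degree
      exact natDegree_sub_le_of_le (natDegree_mul_le_of_le hp' hq) (natDegree_mul_le_of_le hX hdeg)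
        |>.trans (by omega)
    · have hd : HasDerivAt (fun x : ℝ => p.eval x / (1 + x ^ 2) ^ (k + 1))
          ((p.derivative.eval x * (1 + x ^ 2) ^ (k + 1)
            - p.eval x * ((k + 1 : ℕ) * (1 + x ^ 2) ^ k * (2 * x)))
            / ((1 + x ^ 2) ^ (k + 1)) ^ 2) x :=
        (p.hasDerivAt x).div (by simpa using ((hasDerivAt_pow 2 x).const_add 1).fun_pow (k + 1))
          (by positivity)
      rw [iteratedDeriv_succ, funext hp, hd.deriv]
      simp only [eval_sub, eval_mul, eval_add, eval_one, eval_pow, eval_X, eval_C]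
      field_simp
      push_cast
      ring

theorem tendsto_inv_one_add_sq_atTop : Tendsto (fun x : ℝ => (1 + x ^ 2)⁻¹) atTop (𝓝 0) :=
  tendsto_inv_atTop_zero.comp <| tendsto_atTop_add_const_left _ _ <| tendsto_pow_atTop two_ne_zero

theorem isBigO_iteratedDeriv_one_div_one_add_sq (k : ℕ) :
    iteratedDeriv k φ =O[atTop] fun x => (1 + x ^ 2)⁻¹ := by
  obtain ⟨p, hdeg, hp⟩ := exists_iteratedDeriv_one_div_one_add_sq_eq k
  have hq : ((1 + X ^ 2 : ℝ[X]) ^ k).degree = (2 * k : ℕ) := by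
    rw [degree_pow, degree_add_eq_right_of_degree_lt] <;> simp [mul_comm]
  have hpoly : (fun x => p.eval x) =O[atTop] fun x => (1 + x ^ 2) ^ k :=
    (isBigO_atTop_of_degree_le p _ (hq ▸ degree_le_of_natDegree_le hdeg)).congr_right
      fun x => by simp
  refine (hpoly.mul (isBigO_refl (fun x => ((1 + x ^ 2) ^ (k + 1))⁻¹) atTop)).congr
    (fun x => ?_) fun x => ?_
  · rw [hp, div_eq_mul_inv]
  · have : 1 + x ^ 2 ≠ 0 := by positivity
    field_simp
    ring

theorem isBigO_iteratedDeriv_mul_iteratedDeriv_one_div_one_add_sq (a b : ℕ) :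
    (fun x => iteratedDeriv a φ x * iteratedDeriv b φ x) =O[atTop] fun x => (1 + x ^ 2)⁻¹ := by
  simpa using (isBigO_iteratedDeriv_one_div_one_add_sq a).mul
    ((isBigO_iteratedDeriv_one_div_one_add_sq b).trans
      (tendsto_inv_one_add_sq_atTop.isBigO_one ℝ))

theorem integrableOn_Ioi_iteratedDeriv_mul_iteratedDeriv_one_div_one_add_sq (a b : ℕ) (c : ℝ) :
    IntegrableOn (fun x => iteratedDeriv a φ x * iteratedDeriv b φ x) (Ioi c) := by
  have hcont : Continuous fun x => iteratedDeriv a φ x * iteratedDeriv b φ x :=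
    (contDiff_one_div_one_add_sq.continuous_iteratedDeriv a (by exact_mod_cast le_top)).mul
      (contDiff_one_div_one_add_sq.continuous_iteratedDeriv b (by exact_mod_cast le_top))
  exact ((hcont.locallyIntegrable.locallyIntegrableOn _).integrableOn_of_isBigO_atTop
    (isBigO_iteratedDeriv_mul_iteratedDeriv_one_div_one_add_sq a b)
    (integrable_inv_one_add_sq.integrableAtFilter _)).mono_set Ioi_subset_Ici_self

theorem tendsto_iteratedDeriv_mul_iteratedDeriv_one_div_one_add_sq (a b : ℕ) :
    Tendsto (fun x => iteratedDeriv a φ x * iteratedDeriv b φ x) atTop (𝓝 0) :=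
  (isBigO_iteratedDeriv_mul_iteratedDeriv_one_div_one_add_sq a b).trans_tendsto
    tendsto_inv_one_add_sq_atTop

theorem stmt_9 (f : ℝ → ℝ) (hf : ∀ x : ℝ, f x = 1 / (1 + x ^ 2))
    (I : ℕ → ℕ → ℝ)
    (hI : ∀ m n : ℕ, I m n = ∫ x in Set.Ioi (0 : ℝ), iteratedDeriv m f x * iteratedDeriv n f x)
    (m n : ℕ) (hn : 1 ≤ n) :
    I m n = -(iteratedDeriv m f 0 * iteratedDeriv (n - 1) f 0) - I (m + 1) (n - 1) := by
  obtain rfl : f = φ := funext hf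
  obtain ⟨n, rfl⟩ := Nat.exists_eq_add_of_le' hn
  rw [Nat.add_sub_cancel, hI, hI]
  exact integral_Ioi_iteratedDeriv_mul_iteratedDeriv_succ contDiff_one_div_one_add_sq
    (integrableOn_Ioi_iteratedDeriv_mul_iteratedDeriv_one_div_one_add_sq _ _ _)
    (integrableOn_Ioi_iteratedDeriv_mul_iteratedDeriv_one_div_one_add_sq _ _ _)
    (tendsto_iteratedDeriv_mul_iteratedDeriv_one_div_one_add_sq _ _)
end

section
/- Let m and n be natural numbers with m > n and m + n odd. Then I_{m,n} = ((-1)^m / 4) · Σ_{j=1}^{m-n} ( sin((m+n)π/2) − (-1)^j · sin((m−n)π/2) ) · (m−j)! · (n+j−1)!. -/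
/-!
Since `1 / (1 + x²) = Re (1 - i x)⁻¹`, the `k`-th derivative is `f_k x = Re (k! iᵏ (1 - i x)^(-1-k))`;
hence `|f_k x| ≤ k! / √(1 + x²)` and `f_k 0 = k! cos (kπ/2)`. Integration by parts gives
`I_{a+1,b} + I_{a,b+1} = -f_a(0) f_b(0)`. Applying this `m - n` times moves `I_{m,n}` to
`(-1)^(m-n) I_{n,m} = -I_{m,n}`, so `2 I_{m,n}` is an alternating sum of boundary terms, which the
product-to-sum formula for `cos · cos` turns into the stated expression.
-/

open MeasureTheory Filter Topology
open scoped Nat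

theorem eq_sum_add_of_step {J c : ℕ → ℕ → ℝ} (hstep : ∀ a b, J (a + 1) b = -c a b - J a (b + 1))
    (n : ℕ) {m k : ℕ} (hk : k ≤ m) :
    J m n = ∑ j ∈ Finset.Icc 1 k, (-1) ^ j * c (m - j) (n + j - 1) + (-1) ^ k * J (m - k) (n + k) := by
  induction k with
  | zero => simp
  | succ k ih =>
    rw [ih (by omega), Finset.sum_Icc_succ_top (by omega), show m - k = m - (k + 1) + 1 by omega,
      hstep, show n + (k + 1) - 1 = n + k by omega, ← add_assoc n k 1]
    ring

theorem eq_half_sum_of_step {J c : ℕ → ℕ → ℝ} (hstep : ∀ a b, J (a + 1) b = -c a b - J a (b + 1))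
    (hsymm : ∀ a b, J a b = J b a) {m n : ℕ} (hnm : n ≤ m) (hodd : Odd (m - n)) :
    J m n = (∑ j ∈ Finset.Icc 1 (m - n), (-1) ^ j * c (m - j) (n + j - 1)) / 2 := by
  have h := eq_sum_add_of_step hstep n (Nat.sub_le m n)
  rw [hodd.neg_one_pow, Nat.sub_sub_self hnm, Nat.add_sub_cancel' hnm, hsymm n m] at h
  linarith

theorem integral_Ioi_succ_mul_eq {F : ℕ → ℝ → ℝ} (hF : ∀ k x, HasDerivAt (F k) (F (k + 1) x) x)
    (hint : ∀ a b, IntegrableOn (fun x => F a x * F b x) (Set.Ioi 0))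
    (hlim : ∀ a b, Tendsto (fun x => F a x * F b x) atTop (𝓝 0)) (a b : ℕ) :
    ∫ x in Set.Ioi 0, F (a + 1) x * F b x =
      -(F a 0 * F b 0) - ∫ x in Set.Ioi 0, F a x * F (b + 1) x := by
  have hcont : ∀ k, Continuous (F k) := fun k =>
    continuous_iff_continuousAt.2 fun x => (hF k x).continuousAt
  have h_zero : Tendsto (F a * F b) (𝓝[>] 0) (𝓝 (F a 0 * F b 0)) :=
    (((hcont a).mul (hcont b)).tendsto 0).mono_left nhdsWithin_le_nhds
  have H := integral_Ioi_deriv_mul_eq_sub (fun x _ => hF a x) (fun x _ => hF b x)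
    ((hint (a + 1) b).add (hint a (b + 1))) h_zero (hlim a b)
  rw [integral_add (hint (a + 1) b) (hint a (b + 1))] at H
  linarith

theorem integral_Ioi_mul_eq_half_sum {F : ℕ → ℝ → ℝ}
    (hF : ∀ k x, HasDerivAt (F k) (F (k + 1) x) x)
    (hint : ∀ a b, IntegrableOn (fun x => F a x * F b x) (Set.Ioi 0))
    (hlim : ∀ a b, Tendsto (fun x => F a x * F b x) atTop (𝓝 0))
    {m n : ℕ} (hnm : n ≤ m) (hodd : Odd (m - n)) :
    ∫ x in Set.Ioi 0, F m x * F n x =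
      (∑ j ∈ Finset.Icc 1 (m - n), (-1) ^ j * (F (m - j) 0 * F (n + j - 1) 0)) / 2 :=
  eq_half_sum_of_step (J := fun a b => ∫ x in Set.Ioi 0, F a x * F b x)
    (integral_Ioi_succ_mul_eq hF hint hlim)
    (fun a b => by simp only [mul_comm]) hnm hodd

theorem iteratedDeriv_re_ofReal {G : ℂ → ℂ} (hG : ∀ k (x : ℝ), DifferentiableAt ℂ (deriv^[k] G) x)
    (k : ℕ) : iteratedDeriv k (fun x : ℝ => (G x).re) = fun x : ℝ => (deriv^[k] G x).re := by
  induction k with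
  | zero => simp
  | succ k ih =>
    ext x
    rw [iteratedDeriv_succ, ih, Function.iterate_succ_apply']
    exact (hG k x).hasDerivAt.real_of_complex.deriv

section

open Complex

theorem norm_neg_I_mul_add_one_sq (x : ℝ) : ‖-I * x + 1‖ ^ 2 = 1 + x ^ 2 := by
  rw [show -I * x + 1 = ((1 : ℝ) : ℂ) + ((-x : ℝ) : ℂ) * I by push_cast; ring, Complex.sq_norm,
    normSq_add_mul_I]
  ring

theorem inv_one_add_sq_eq_re (x : ℝ) : 1 / (1 + x ^ 2) = ((-I * x + 1)⁻¹).re := by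
  rw [inv_re, normSq_eq_norm_sq, norm_neg_I_mul_add_one_sq]
  simp

theorem iteratedDeriv_inv_one_add_sq (k : ℕ) :
    iteratedDeriv k (fun x : ℝ => 1 / (1 + x ^ 2)) =
      fun x : ℝ => (k ! * I ^ k * (-I * x + 1) ^ (-1 - k : ℤ)).re := by
  have hne : ∀ x : ℝ, -I * x + 1 ≠ 0 := fun x h => by simpa using congrArg re h
  simp_rw [inv_one_add_sq_eq_re]
  rw [iteratedDeriv_re_ofReal (G := fun z => (-I * z + 1)⁻¹)]
  · ext x
    rw [iter_deriv_inv_linear]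
    have h : (-1 : ℂ) ^ k * (-1) ^ k = 1 := by rw [← mul_pow]; norm_num
    congr 1
    rw [neg_pow]
    linear_combination (k ! * I ^ k * (-I * x + 1) ^ (-1 - k : ℤ)) * h
  · intro k x
    rw [iter_deriv_inv_linear]
    have h : DifferentiableAt ℂ (fun z : ℂ => -I * z + 1) x := by fun_prop
    exact (h.zpow (Or.inl (hne x))).const_mul _

theorem one_le_norm_neg_I_mul_add_one (x : ℝ) : 1 ≤ ‖-I * x + 1‖ := by
  have := norm_neg_I_mul_add_one_sq x
  nlinarith [norm_nonneg (-I * x + 1), sq_nonneg x]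

theorem abs_iteratedDeriv_inv_one_add_sq_le (k : ℕ) (x : ℝ) :
    |iteratedDeriv k (fun x : ℝ => 1 / (1 + x ^ 2)) x| ≤ k ! * ‖-I * x + 1‖⁻¹ := by
  have h1 := one_le_norm_neg_I_mul_add_one x
  rw [iteratedDeriv_inv_one_add_sq]
  refine (abs_re_le_norm _).trans ?_
  rw [norm_mul, norm_mul, norm_pow, norm_I, one_pow, mul_one, norm_natCast, norm_zpow]
  gcongr
  calc ‖-I * x + 1‖ ^ (-1 - k : ℤ) ≤ ‖-I * x + 1‖ ^ (-1 : ℤ) :=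
        zpow_le_zpow_right₀ h1 (by omega)
    _ = _ := zpow_neg_one _

theorem abs_mul_iteratedDeriv_inv_one_add_sq_le (a b : ℕ) (x : ℝ) :
    |iteratedDeriv a (fun x : ℝ => 1 / (1 + x ^ 2)) x *
        iteratedDeriv b (fun x : ℝ => 1 / (1 + x ^ 2)) x| ≤ (a ! * b ! : ℝ) * (1 + x ^ 2)⁻¹ := by
  rw [abs_mul, ← norm_neg_I_mul_add_one_sq, ← inv_pow, sq]
  calc _ ≤ (a ! * ‖-I * x + 1‖⁻¹) * (b ! * ‖-I * x + 1‖⁻¹) :=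
        mul_le_mul (abs_iteratedDeriv_inv_one_add_sq_le a x)
          (abs_iteratedDeriv_inv_one_add_sq_le b x) (abs_nonneg _) (by positivity)
    _ = _ := by ring

theorem iteratedDeriv_inv_one_add_sq_zero (k : ℕ) :
    iteratedDeriv k (fun x : ℝ => 1 / (1 + x ^ 2)) 0 = k ! * Real.cos (k * Real.pi / 2) := by
  have hI : I ^ k = exp ((k * Real.pi / 2 : ℝ) * I) := by
    conv_lhs => rw [← exp_pi_div_two_mul_I, ← exp_nat_mul]
    push_cast
    ring_nf
  rw [iteratedDeriv_inv_one_add_sq]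
  simp only [ofReal_zero, mul_zero, zero_add, one_zpow, mul_one, hI]
  rw [← ofReal_natCast, re_ofReal_mul, exp_ofReal_mul_I_re]

end

theorem hasDerivAt_iteratedDeriv_inv_one_add_sq (k : ℕ) (x : ℝ) :
    HasDerivAt (iteratedDeriv k (fun x : ℝ => 1 / (1 + x ^ 2)))
      (iteratedDeriv (k + 1) (fun x : ℝ => 1 / (1 + x ^ 2)) x) x := by
  have h : ContDiff ℝ (k + 1) (fun x : ℝ => 1 / (1 + x ^ 2)) :=
    contDiff_const.div (by fun_prop) fun x => by positivity
  rw [iteratedDeriv_succ]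
  exact (h.differentiable_iteratedDeriv' k x).hasDerivAt

theorem integrableOn_mul_iteratedDeriv_inv_one_add_sq (a b : ℕ) :
    IntegrableOn (fun x => iteratedDeriv a (fun x : ℝ => 1 / (1 + x ^ 2)) x *
      iteratedDeriv b (fun x : ℝ => 1 / (1 + x ^ 2)) x) (Set.Ioi 0) := by
  refine Integrable.mono' (integrable_inv_one_add_sq.const_mul ((a ! * b ! : ℝ))).integrableOn
    ?_ (ae_of_all _ fun x => abs_mul_iteratedDeriv_inv_one_add_sq_le a b x)
  have hcont : ∀ k, Continuous (iteratedDeriv k (fun x : ℝ => 1 / (1 + x ^ 2))) := fun k =>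
    continuous_iff_continuousAt.2 fun x => (hasDerivAt_iteratedDeriv_inv_one_add_sq k x).continuousAt
  exact ((hcont a).mul (hcont b)).aestronglyMeasurable

theorem tendsto_mul_iteratedDeriv_inv_one_add_sq (a b : ℕ) :
    Tendsto (fun x => iteratedDeriv a (fun x : ℝ => 1 / (1 + x ^ 2)) x *
      iteratedDeriv b (fun x : ℝ => 1 / (1 + x ^ 2)) x) atTop (𝓝 0) := by
  refine squeeze_zero_norm (fun x => abs_mul_iteratedDeriv_inv_one_add_sq_le a b x) ?_
  have h : Tendsto (fun x : ℝ => 1 + x ^ 2) atTop atTop :=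
    tendsto_atTop_add_const_left _ 1 (tendsto_pow_atTop two_ne_zero)
  simpa using (tendsto_inv_atTop_zero.comp h).const_mul ((a ! * b ! : ℝ))

section

open Real

theorem neg_one_pow_mul_cos_nat_mul_pi_div_two (k : ℕ) :
    (-1 : ℝ) ^ k * cos (k * π / 2) = cos (k * π / 2) := by
  rcases Nat.even_or_odd k with hk | ⟨t, rfl⟩
  · rw [hk.neg_one_pow, one_mul]
  · have h : cos (((2 * t + 1 : ℕ) : ℝ) * π / 2) = 0 :=
      cos_eq_zero_iff.2 ⟨t, by push_cast; ring⟩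
    rw [h, mul_zero]

theorem neg_one_pow_mul_cos_sub_mul_pi_div_two {j m : ℕ} (hjm : j ≤ m) :
    (-1 : ℝ) ^ j * cos (((m - j : ℕ) : ℝ) * π / 2) = (-1) ^ m * cos (((m - j : ℕ) : ℝ) * π / 2) := by
  rw [← Nat.add_sub_cancel' hjm, pow_add, Nat.add_sub_cancel_left, mul_assoc,
    neg_one_pow_mul_cos_nat_mul_pi_div_two]

theorem two_mul_cos_sub_mul_cos_add_sub_one {m n j : ℕ} (hj : 1 ≤ j) (hjm : j ≤ m) :
    2 * cos (((m - j : ℕ) : ℝ) * π / 2) * cos (((n + j - 1 : ℕ) : ℝ) * π / 2) =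
      sin ((m + n) * π / 2) - (-1 : ℝ) ^ j * sin ((m - n : ℝ) * π / 2) := by
  have hsub : ((m - j : ℕ) : ℝ) * π / 2 - ((n + j - 1 : ℕ) : ℝ) * π / 2 =
      (m - n : ℝ) * π / 2 + π / 2 - j * π := by
    rw [Nat.cast_sub hjm, Nat.cast_sub (by omega)]; push_cast; ring
  have hadd : ((m - j : ℕ) : ℝ) * π / 2 + ((n + j - 1 : ℕ) : ℝ) * π / 2 =
      (m + n) * π / 2 - π / 2 := by
    rw [Nat.cast_sub hjm, Nat.cast_sub (by omega)]; push_cast; ring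
  rw [two_mul_cos_mul_cos, hsub, hadd, cos_sub_nat_mul_pi, cos_add_pi_div_two, cos_sub_pi_div_two]
  ring

end

theorem stmt_15 (f : ℝ → ℝ) (hf : ∀ x : ℝ, f x = 1 / (1 + x ^ 2))
    (I : ℕ → ℕ → ℝ)
    (hI : ∀ m n : ℕ, I m n = ∫ x in Set.Ioi (0 : ℝ), iteratedDeriv m f x * iteratedDeriv n f x)
    (m n : ℕ) (hmn : n < m) (hodd : Odd (m + n)) :
    I m n = ((-1 : ℝ) ^ m / 4) *
      ∑ j ∈ Finset.Icc 1 (m - n),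
        (Real.sin ((m + n) * Real.pi / 2) - (-1 : ℝ) ^ j * Real.sin ((m - n : ℝ) * Real.pi / 2))
          * ((m - j).factorial : ℝ) * ((n + j - 1).factorial : ℝ) := by
  obtain rfl : f = fun x => 1 / (1 + x ^ 2) := funext hf
  have hodd_sub : Odd (m - n) := by
    rw [Nat.odd_sub hmn.le]; rwa [Nat.odd_add] at hodd
  rw [hI, integral_Ioi_mul_eq_half_sum hasDerivAt_iteratedDeriv_inv_one_add_sq
    integrableOn_mul_iteratedDeriv_inv_one_add_sq tendsto_mul_iteratedDeriv_inv_one_add_sq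
    hmn.le hodd_sub, Finset.sum_div, Finset.mul_sum]
  refine Finset.sum_congr rfl fun j hj => ?_
  obtain ⟨hj, hjmn⟩ := Finset.mem_Icc.1 hj
  have hjm : j ≤ m := hjmn.trans (Nat.sub_le m n)
  rw [iteratedDeriv_inv_one_add_sq_zero, iteratedDeriv_inv_one_add_sq_zero,
    ← two_mul_cos_sub_mul_cos_add_sub_one hj hjm]
  linear_combination ((m - j).factorial * (n + j - 1).factorial *
    Real.cos ((n + j - 1 : ℕ) * Real.pi / 2) / 2) * neg_one_pow_mul_cos_sub_mul_pi_div_two hjm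
end

section
/- For every natural number k, I_{2k+2, 2k+1} = ∫_0^∞ f_{2k+2}(x) f_{2k+1}(x) dx = 0. -/
/-!
Since `1 / (1 + x ^ 2) = Im (x - i)⁻¹`, the derivatives are
`f_n x = Im ((-1) ^ n n! (x - i) ^ (-(n + 1)))`, so `|f_n x| ≤ n! / |x - i|`: every product
`f_m f_n` is integrable and every `f_n` tends to `0` at infinity. As `f_{n+1} f_n = (f_n ^ 2 / 2)'`,
the integral equals `-f_n(0) ^ 2 / 2`, and `f_n(0) = 0` for odd `n` because `f` is even.
-/

open Complex MeasureTheory Filter Set Topology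
open scoped Nat

theorem Function.Even.iteratedDeriv_eq_zero_of_odd {F : Type*} [NormedAddCommGroup F]
    [NormedSpace ℝ F] {f : ℝ → F} (hf : f.Even) {n : ℕ} (hn : Odd n) :
    iteratedDeriv n f 0 = 0 := by
  have h := iteratedDeriv_comp_neg n f 0
  simp only [hf _, neg_zero, hn.neg_one_pow, neg_one_smul] at h
  have h2 := eq_neg_iff_add_eq_zero.1 h
  rwa [← two_smul ℝ, smul_eq_zero, or_iff_right two_ne_zero] at h2

theorem integral_Ioi_deriv_mul_self {g g' : ℝ → ℝ} {a : ℝ}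
    (hg : ∀ x ∈ Ici a, HasDerivAt g (g' x) x) (hint : IntegrableOn (fun x => g' x * g x) (Ioi a))
    (hlim : Tendsto g atTop (𝓝 0)) :
    ∫ x in Ioi a, g' x * g x = -(g a ^ 2 / 2) := by
  have hsq : ∀ x ∈ Ici a, HasDerivAt (fun x => g x ^ 2 / 2) (g' x * g x) x := fun x hx =>
    (((hg x hx).pow 2).div_const 2).congr_deriv (by push_cast; ring)
  rw [integral_Ioi_of_hasDerivAt_of_tendsto' hsq hint (by simpa using (hlim.pow 2).div_const 2),
    zero_sub]

lemma ofReal_sub_I_ne_zero (x : ℝ) : (x : ℂ) - I ≠ 0 := by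
  intro h
  simpa using congrArg Complex.im h

lemma sq_norm_ofReal_sub_I (x : ℝ) : ‖(x : ℂ) - I‖ ^ 2 = 1 + x ^ 2 := by
  rw [Complex.sq_norm, normSq_apply]
  simp only [sub_re, ofReal_re, I_re, sub_zero, sub_im, ofReal_im, I_im, zero_sub, mul_neg,
    mul_one, neg_neg]
  ring

lemma one_le_norm_ofReal_sub_I (x : ℝ) : 1 ≤ ‖(x : ℂ) - I‖ := by
  have := sq_norm_ofReal_sub_I x
  nlinarith [norm_nonneg ((x : ℂ) - I), sq_nonneg x]

noncomputable def invSubIDeriv (n : ℕ) (x : ℝ) : ℂ :=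
  (-1) ^ n * n ! * ((x : ℂ) - I) ^ (-(n + 1 : ℤ))

lemma hasDerivAt_invSubIDeriv (n : ℕ) (x : ℝ) :
    HasDerivAt (invSubIDeriv n) (invSubIDeriv (n + 1) x) x := by
  have hpow := (hasDerivAt_zpow (-(n + 1 : ℤ)) ((x : ℂ) - I) (.inl (ofReal_sub_I_ne_zero x))).comp
    (x : ℂ) ((hasDerivAt_id _).sub_const I)
  refine ((hpow.const_mul ((-1 : ℂ) ^ n * n !)).comp_ofReal).congr_deriv ?_
  simp only [invSubIDeriv, Nat.factorial_succ]
  rw [show -(((n + 1 : ℕ) : ℤ) + 1) = -(n + 1 : ℤ) - 1 by push_cast; ring]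
  push_cast
  ring

lemma norm_invSubIDeriv_le (n : ℕ) (x : ℝ) :
    ‖invSubIDeriv n x‖ ≤ n ! * ‖(x : ℂ) - I‖⁻¹ := by
  rw [invSubIDeriv, norm_mul, norm_mul, norm_pow, norm_neg, norm_one, one_pow, one_mul,
    norm_natCast, norm_zpow, ← zpow_neg_one]
  gcongr
  · exact one_le_norm_ofReal_sub_I x
  · omega

section

variable {f : ℝ → ℝ}

lemma iteratedDeriv_eq_im_invSubIDeriv (hf : ∀ x, f x = 1 / (1 + x ^ 2)) (n : ℕ) :
    iteratedDeriv n f = fun x => (invSubIDeriv n x).im := by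
  induction n with
  | zero =>
    ext x
    rw [iteratedDeriv_zero, hf, invSubIDeriv]
    simp only [pow_zero, Nat.factorial_zero, Nat.cast_one, mul_one, CharP.cast_eq_zero, zero_add,
      one_mul, zpow_neg, zpow_one, inv_im, sub_im, ofReal_im, I_im, zero_sub, neg_neg,
      normSq_apply, sub_re, ofReal_re, I_re, sub_zero, mul_neg]
    ring
  | succ n ih =>
    ext x
    rw [iteratedDeriv_succ, ih]
    exact (imCLM.hasFDerivAt.comp_hasDerivAt x (hasDerivAt_invSubIDeriv n x)).deriv

lemma hasDerivAt_iteratedDeriv (hf : ∀ x, f x = 1 / (1 + x ^ 2)) (n : ℕ) (x : ℝ) :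
    HasDerivAt (iteratedDeriv n f) (iteratedDeriv (n + 1) f x) x := by
  rw [iteratedDeriv_eq_im_invSubIDeriv hf, iteratedDeriv_eq_im_invSubIDeriv hf]
  exact imCLM.hasFDerivAt.comp_hasDerivAt x (hasDerivAt_invSubIDeriv n x)

lemma continuous_iteratedDeriv (hf : ∀ x, f x = 1 / (1 + x ^ 2)) (n : ℕ) :
    Continuous (iteratedDeriv n f) :=
  continuous_iff_continuousAt.2 fun x => (hasDerivAt_iteratedDeriv hf n x).continuousAt

lemma abs_iteratedDeriv_le (hf : ∀ x, f x = 1 / (1 + x ^ 2)) (n : ℕ) (x : ℝ) :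
    |iteratedDeriv n f x| ≤ n ! * ‖(x : ℂ) - I‖⁻¹ := by
  rw [iteratedDeriv_eq_im_invSubIDeriv hf]
  exact (abs_im_le_norm _).trans (norm_invSubIDeriv_le n x)

lemma integrable_iteratedDeriv_mul (hf : ∀ x, f x = 1 / (1 + x ^ 2)) (m n : ℕ) :
    Integrable (fun x => iteratedDeriv m f x * iteratedDeriv n f x) := by
  refine (integrable_inv_one_add_sq.const_mul (m ! * n ! : ℝ)).mono'
    ((continuous_iteratedDeriv hf m).mul (continuous_iteratedDeriv hf n)).aestronglyMeasurable
    (.of_forall fun x => ?_)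
  rw [norm_mul, Real.norm_eq_abs, Real.norm_eq_abs, ← sq_norm_ofReal_sub_I, ← inv_pow]
  calc _ ≤ (m ! * ‖(x : ℂ) - I‖⁻¹) * (n ! * ‖(x : ℂ) - I‖⁻¹) :=
        mul_le_mul (abs_iteratedDeriv_le hf m x) (abs_iteratedDeriv_le hf n x) (abs_nonneg _)
          (by positivity)
    _ = _ := by ring

lemma tendsto_iteratedDeriv_atTop (hf : ∀ x, f x = 1 / (1 + x ^ 2)) (n : ℕ) :
    Tendsto (iteratedDeriv n f) atTop (𝓝 0) := by
  have hnorm : Tendsto (fun x : ℝ => ‖(x : ℂ) - I‖) atTop atTop :=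
    tendsto_atTop_mono
      (fun x => (le_abs_self x).trans (by simpa using abs_re_le_norm ((x : ℂ) - I))) tendsto_id
  refine squeeze_zero_norm (fun x => abs_iteratedDeriv_le hf n x) ?_
  simpa using hnorm.inv_tendsto_atTop.const_mul (n ! : ℝ)

end

theorem stmt_16 (f : ℝ → ℝ) (hf : ∀ x : ℝ, f x = 1 / (1 + x ^ 2)) (k : ℕ) :
    ∫ x in Set.Ioi (0 : ℝ), iteratedDeriv (2 * k + 2) f x * iteratedDeriv (2 * k + 1) f x = 0 := by
  have hf_even : f.Even := fun x => by simp [hf]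
  rw [integral_Ioi_deriv_mul_self (fun x _ => hasDerivAt_iteratedDeriv hf _ x)
    (integrable_iteratedDeriv_mul hf _ _).integrableOn (tendsto_iteratedDeriv_atTop hf _),
    hf_even.iteratedDeriv_eq_zero_of_odd (odd_two_mul_add_one k)]
  simp
end
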